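/- Let L be an embedded polygonal arc in ℝ³ with vertices p₀, …, p_n (n ≥ 1), edges eᵢ = [p_{i−1}, pᵢ], and edge lines ℓᵢ (the 1-dimensional affine subspace through p_{i−1} and pᵢ). Let u be a unit vector such that: (a) for every i, pᵢ − p_{i−1} does not lie in the span of u; (b) for every vertex v of L and every edge line ℓⱼ with v ∉ ℓⱼ, u does not lie in the direction space of the affine span of {v} ∪ ℓⱼ; (c) for any two distinct edge lines ℓᵢ, ℓⱼ that are coplanar (i.e., contained in a common 2-dimensional affine subspace), u does not lie in the direction space of that 2-dimensional affine subspace; (d) no line with direction u meets L in three distinct points. Then the orthogonal projection π_u restricted to L satisfies: π_u is injective on each edge eᵢ; every point of the plane has at most two preimages in L; whenever x ≠ y are points of L with π_u x = π_u y, then x and y are not vertices of L and lie on two distinct edges; and the set of points of the plane having exactly two preimages in L is finite. (First part of Lemma 2.1: for u outside the trace set, the projection image of L is an arc diagram.) -/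

import Mathlib

open Module Set

local notation "E3" => EuclideanSpace ℝ (Fin 3)

/-- The orthogonal projection of ℝ³ onto the orthogonal complement of the span of `u`. -/
noncomputable def projAlong (u : E3) : E3 →L[ℝ] ↥((ℝ ∙ u)ᗮ) :=
  Submodule.orthogonalProjectionOnto ((ℝ ∙ u)ᗮ)

/-! `π_u x = π_u y` means `x - y ∈ ℝ ∙ u`, so everything is linear algebra of that relation.
Two distinct related points on one edge line would make that line parallel to `u`,
contradicting (a); a vertex related to a point of another edge line puts `u` in the plane they
span, contradicting (b); three points in one fibre contradict (d). Two distinct double points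
between the edges `i` and `j` put both edge lines into the plane through one of the points
spanned by `u` and the direction of edge `i`, contradicting (c), so each pair of edges carries at
most one double point. -/

section Parallel

variable {k V : Type*} [DivisionRing k] [AddCommGroup V] [Module k V]

theorem Submodule.mem_of_mem_span_singleton_of_ne_zero {W : Submodule k V} {v a : V}
    (hva : v ∈ k ∙ a) (hv : v ≠ 0) (hvW : v ∈ W) : a ∈ W := by
  obtain ⟨c, rfl⟩ := Submodule.mem_span_singleton.1 hva
  exact (W.smul_mem_iff (left_ne_zero_of_smul hv)).1 hvW

theorem AffineSubspace.mem_direction_of_sub_mem_span_singleton {S : AffineSubspace k V}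
    {x y u : V} (hx : x ∈ S) (hy : y ∈ S) (hxy : x ≠ y) (h : x - y ∈ k ∙ u) :
    u ∈ S.direction :=
  Submodule.mem_of_mem_span_singleton_of_ne_zero h (sub_ne_zero.2 hxy)
    (S.vsub_mem_direction hx hy)

theorem sub_mem_span_singleton_of_mem_affineSpan_pair {a b x y : V}
    (hx : x ∈ line[k, a, b]) (hy : y ∈ line[k, a, b]) : x - y ∈ k ∙ (b - a) := by
  simpa [direction_affineSpan, vectorSpan_pair_rev] using
    AffineSubspace.vsub_mem_direction hx hy

theorem eq_of_mem_affineSpan_pair_of_sub_mem_span_singleton {a b x y u : V}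
    (hab : b - a ∉ k ∙ u) (hx : x ∈ line[k, a, b]) (hy : y ∈ line[k, a, b])
    (h : x - y ∈ k ∙ u) : x = y := by
  by_contra hxy
  exact hab (Submodule.mem_of_mem_span_singleton_of_ne_zero
    (sub_mem_span_singleton_of_mem_affineSpan_pair hx hy) (sub_ne_zero.2 hxy) h)

theorem eq_of_sub_mem_span_singleton_of_notMem_direction_join {a b v w u : V}
    (hab : b - a ∉ k ∙ u)
    (hv : v ∉ line[k, a, b] →
      u ∉ (affineSpan k ({v} ∪ (line[k, a, b] : Set V))).direction)
    (hw : w ∈ line[k, a, b]) (h : w - v ∈ k ∙ u) : w = v := by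
  by_cases hvl : v ∈ line[k, a, b]
  · exact eq_of_mem_affineSpan_pair_of_sub_mem_span_singleton hab hw hvl h
  · by_contra hwv
    exact hv hvl (AffineSubspace.mem_direction_of_sub_mem_span_singleton
      (subset_affineSpan k _ (Or.inr hw)) (subset_affineSpan k _ (Or.inl rfl)) hwv h)

theorem affineSpan_pair_le_of_mem_of_sub_mem_direction {Q : AffineSubspace k V} {a b x : V}
    (hx : x ∈ line[k, a, b]) (hxQ : x ∈ Q) (hab : b - a ∈ Q.direction) :
    line[k, a, b] ≤ Q := by
  rw [← AffineSubspace.mk'_eq hx, ← AffineSubspace.mk'_eq hxQ, AffineSubspace.mk'_le_mk'_iff,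
    direction_affineSpan, vectorSpan_pair_rev]
  exact (Submodule.span_singleton_le_iff_mem _ _).2 hab

theorem exists_plane_of_sub_mem_span_singleton {a b c d x₁ x₂ y₁ y₂ u : V}
    (hab : b - a ∉ k ∙ u) (hx₁ : x₁ ∈ line[k, a, b]) (hx₂ : x₂ ∈ line[k, a, b])
    (hy₁ : y₁ ∈ line[k, c, d]) (hy₂ : y₂ ∈ line[k, c, d])
    (h₁ : x₁ - y₁ ∈ k ∙ u) (h₂ : x₂ - y₂ ∈ k ∙ u) (hxy₁ : x₁ ≠ y₁) (hy : y₁ ≠ y₂) :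
    ∃ Q : AffineSubspace k V, finrank k Q.direction = 2 ∧
      line[k, a, b] ≤ Q ∧ line[k, c, d] ≤ Q ∧ u ∈ Q.direction := by
  set W := Submodule.span k (range ![u, b - a])
  have huW : u ∈ W := Submodule.subset_span ⟨0, rfl⟩
  have hbaW : b - a ∈ W := Submodule.subset_span ⟨1, rfl⟩
  have hu : u ≠ 0 := by
    rintro rfl
    exact hxy₁ (sub_eq_zero.1 (by simpa using h₁))
  have hindep : LinearIndependent k ![u, b - a] :=
    (LinearIndependent.pair_iff' hu).2 fun r hr => hab (hr ▸ Submodule.smul_mem _ r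
      (Submodule.mem_span_singleton_self u))
  have hspan_u : k ∙ u ≤ W := (Submodule.span_singleton_le_iff_mem _ _).2 huW
  have hy₁W : y₁ - x₁ ∈ W := hspan_u (by simpa using (k ∙ u).neg_mem h₁)
  have hdcW : d - c ∈ W := by
    refine Submodule.mem_of_mem_span_singleton_of_ne_zero
      (sub_mem_span_singleton_of_mem_affineSpan_pair hy₂ hy₁) (sub_ne_zero.2 hy.symm) ?_
    have hx : x₂ - x₁ ∈ W := (Submodule.span_singleton_le_iff_mem _ _).2 hbaW
      (sub_mem_span_singleton_of_mem_affineSpan_pair hx₂ hx₁)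
    convert W.sub_mem (W.sub_mem hx (hspan_u h₂)) hy₁W using 1
    abel
  refine ⟨AffineSubspace.mk' x₁ W, ?_, ?_, ?_, ?_⟩
  · rw [AffineSubspace.direction_mk', finrank_span_eq_card hindep, Fintype.card_fin]
  · exact affineSpan_pair_le_of_mem_of_sub_mem_direction hx₁
      (AffineSubspace.self_mem_mk' _ _) (by rwa [AffineSubspace.direction_mk'])
  · exact affineSpan_pair_le_of_mem_of_sub_mem_direction hy₁
      (AffineSubspace.mem_mk'.2 hy₁W) (by rwa [AffineSubspace.direction_mk'])
  · rwa [AffineSubspace.direction_mk']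

end Parallel

theorem segment_subset_affineSpan_pair {𝕜 E : Type*} [Ring 𝕜] [PartialOrder 𝕜]
    [IsOrderedRing 𝕜] [AddCommGroup E] [Module 𝕜 E] (a b : E) :
    segment 𝕜 a b ⊆ line[𝕜, a, b] := by
  rw [← convexHull_pair]
  exact convexHull_subset_affineSpan _

theorem encard_fiber_le_two {α β : Type*} {s : Set α} {f : α → β}
    (h : ∀ x ∈ s, ∀ y ∈ s, ∀ z ∈ s, x ≠ y → x ≠ z → y ≠ z → f y = f x → f z ≠ f x)
    (q : β) : {x ∈ s | f x = q}.encard ≤ 2 := by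
  by_contra! hlt
  obtain ⟨t, hts, ht⟩ := exists_subset_encard_eq (Order.add_one_le_of_lt hlt)
  obtain ⟨x, y, z, hxy, hxz, hyz, rfl⟩ := encard_eq_three.1 ht
  obtain ⟨hx, hfx⟩ := hts (mem_insert x _)
  obtain ⟨hy, hfy⟩ := hts (mem_insert_of_mem x (mem_insert y _))
  obtain ⟨hz, hfz⟩ := hts (mem_insert_of_mem x (mem_insert_of_mem y rfl))
  exact h x hx y hy z hz hxy hxz hyz (hfy.trans hfx.symm) (hfz.trans hfx.symm)

theorem projAlong_eq_projAlong_iff {u x y : E3} :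
    projAlong u x = projAlong u y ↔ x - y ∈ ℝ ∙ u := by
  rw [← sub_eq_zero, ← map_sub, projAlong, Submodule.orthogonalProjectionOnto_eq_zero_iff,
    Submodule.orthogonal_orthogonal]

theorem injOn_projAlong_affineSpan_pair {u a b : E3} (hab : b - a ∉ ℝ ∙ u) :
    InjOn (projAlong u) line[ℝ, a, b] := fun _ hx _ hy h =>
  eq_of_mem_affineSpan_pair_of_sub_mem_span_singleton hab hx hy (projAlong_eq_projAlong_iff.1 h)

theorem subsingleton_projAlong_double_points {u a b c d : E3} (hab : b - a ∉ ℝ ∙ u)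
    (hplane : line[ℝ, a, b] ≠ line[ℝ, c, d] → ∀ Q : AffineSubspace ℝ E3,
      finrank ℝ Q.direction = 2 → line[ℝ, a, b] ≤ Q → line[ℝ, c, d] ≤ Q → u ∉ Q.direction) :
    {q | ∃ x ∈ line[ℝ, a, b], ∃ y ∈ line[ℝ, c, d],
      x ≠ y ∧ projAlong u x = q ∧ projAlong u y = q}.Subsingleton := by
  rintro _ ⟨x₁, hx₁, y₁, hy₁, hxy₁, rfl, hq₁⟩ _ ⟨x₂, hx₂, y₂, hy₂, -, rfl, hq₂⟩
  by_contra hne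
  have hy : y₁ ≠ y₂ := by
    rintro rfl
    exact hne (hq₁.symm.trans hq₂)
  have h₁ := projAlong_eq_projAlong_iff.1 hq₁.symm
  have hlines : line[ℝ, a, b] ≠ line[ℝ, c, d] := fun heq =>
    hxy₁ (eq_of_mem_affineSpan_pair_of_sub_mem_span_singleton hab hx₁ (heq ▸ hy₁) h₁)
  obtain ⟨Q, hQ, habQ, hcdQ, huQ⟩ := exists_plane_of_sub_mem_span_singleton hab hx₁ hx₂ hy₁ hy₂
    h₁ (projAlong_eq_projAlong_iff.1 hq₂.symm) hxy₁ hy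
  exact hplane hlines Q hQ habQ hcdQ huQ

theorem notMem_range_and_mem_distinct_edges_of_projAlong_eq {n : ℕ} {p : Fin (n + 1) → E3}
    {u : E3}
    (ha : ∀ i : Fin n, p i.succ - p i.castSucc ∉ ℝ ∙ u)
    (hb : ∀ v ∈ range p, ∀ j : Fin n, v ∉ line[ℝ, p j.castSucc, p j.succ] →
      u ∉ (affineSpan ℝ ({v} ∪ (line[ℝ, p j.castSucc, p j.succ] : Set E3))).direction)
    {x y : E3} (hx : x ∈ ⋃ i : Fin n, segment ℝ (p i.castSucc) (p i.succ))
    (hy : y ∈ ⋃ i : Fin n, segment ℝ (p i.castSucc) (p i.succ))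
    (hxy : x ≠ y) (hπ : projAlong u x = projAlong u y) :
    x ∉ range p ∧ y ∉ range p ∧ ∃ i j : Fin n, i ≠ j ∧
      x ∈ segment ℝ (p i.castSucc) (p i.succ) ∧ y ∈ segment ℝ (p j.castSucc) (p j.succ) := by
  have hseg (i : Fin n) := segment_subset_affineSpan_pair (𝕜 := ℝ) (p i.castSucc) (p i.succ)
  obtain ⟨i, hxi⟩ := mem_iUnion.1 hx
  obtain ⟨j, hyj⟩ := mem_iUnion.1 hy
  refine ⟨fun hxp => hxy ?_, fun hyp => hxy ?_, i, j, ?_, hxi, hyj⟩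
  · exact (eq_of_sub_mem_span_singleton_of_notMem_direction_join (ha j) (hb x hxp j)
      (hseg j hyj) (projAlong_eq_projAlong_iff.1 hπ.symm)).symm
  · exact eq_of_sub_mem_span_singleton_of_notMem_direction_join (ha i) (hb y hyp i)
      (hseg i hxi) (projAlong_eq_projAlong_iff.1 hπ)
  · rintro rfl
    exact hxy (injOn_projAlong_affineSpan_pair (ha i) (hseg i hxi) (hseg i hyj) hπ)

theorem arc_diagram_of_trace_set_complement_general
    (n : ℕ) (p : Fin (n + 1) → E3)
    (u : E3)
    -- (a) `u` is not parallel to any edge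
    (ha : ∀ i : Fin n, p i.succ - p i.castSucc ∉ (ℝ ∙ u : Submodule ℝ E3))
    -- (b) for a vertex `v` and an edge line `ℓ j` not containing `v`, `u` is not in the
    -- direction of the plane determined by `v` and `ℓ j`
    (hb : ∀ v : E3, v ∈ Set.range p → ∀ j : Fin n,
      v ∉ affineSpan ℝ {p j.castSucc, p j.succ} →
      u ∉ (affineSpan ℝ
        ({v} ∪ (affineSpan ℝ {p j.castSucc, p j.succ} : Set E3))).direction)
    -- (c) for two distinct coplanar edge lines, `u` is not in the direction of the plane
    -- containing them
    (hc : ∀ i j : Fin n,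
      affineSpan ℝ {p i.castSucc, p i.succ} ≠ affineSpan ℝ {p j.castSucc, p j.succ} →
      ∀ Q : AffineSubspace ℝ E3, finrank ℝ Q.direction = 2 →
        affineSpan ℝ {p i.castSucc, p i.succ} ≤ Q →
        affineSpan ℝ {p j.castSucc, p j.succ} ≤ Q →
        u ∉ Q.direction)
    -- (d) no line with direction `u` meets `L` in three distinct points
    (hd : ¬ ∃ x y z : E3,
      x ∈ (⋃ i : Fin n, segment ℝ (p i.castSucc) (p i.succ)) ∧
      y ∈ (⋃ i : Fin n, segment ℝ (p i.castSucc) (p i.succ)) ∧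
      z ∈ (⋃ i : Fin n, segment ℝ (p i.castSucc) (p i.succ)) ∧
      x ≠ y ∧ x ≠ z ∧ y ≠ z ∧
      y - x ∈ (ℝ ∙ u : Submodule ℝ E3) ∧ z - x ∈ (ℝ ∙ u : Submodule ℝ E3)) :
    (∀ i : Fin n, Set.InjOn (projAlong u) (segment ℝ (p i.castSucc) (p i.succ))) ∧
    (∀ q : ↥((ℝ ∙ u)ᗮ),
      Set.encard {x ∈ ⋃ i : Fin n, segment ℝ (p i.castSucc) (p i.succ) |
        projAlong u x = q} ≤ 2) ∧
    (∀ x y : E3,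
      x ∈ (⋃ i : Fin n, segment ℝ (p i.castSucc) (p i.succ)) →
      y ∈ (⋃ i : Fin n, segment ℝ (p i.castSucc) (p i.succ)) →
      x ≠ y → projAlong u x = projAlong u y →
        x ∉ Set.range p ∧ y ∉ Set.range p ∧
        ∃ i j : Fin n, i ≠ j ∧
          x ∈ segment ℝ (p i.castSucc) (p i.succ) ∧
          y ∈ segment ℝ (p j.castSucc) (p j.succ)) ∧
    {q : ↥((ℝ ∙ u)ᗮ) |
      Set.encard {x ∈ ⋃ i : Fin n, segment ℝ (p i.castSucc) (p i.succ) |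
        projAlong u x = q} = 2}.Finite := by
  have hseg (i : Fin n) := segment_subset_affineSpan_pair (𝕜 := ℝ) (p i.castSucc) (p i.succ)
  have inj (i : Fin n) := (injOn_projAlong_affineSpan_pair (ha i)).mono (hseg i)
  have double := @notMem_range_and_mem_distinct_edges_of_projAlong_eq n p u ha hb
  refine ⟨inj, encard_fiber_le_two fun x hx y hy z hz hxy hxz hyz hyx hzx =>
    hd ⟨x, y, z, hx, hy, hz, hxy, hxz, hyz, projAlong_eq_projAlong_iff.1 hyx,
      projAlong_eq_projAlong_iff.1 hzx⟩, fun _ _ => double, ?_⟩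
  refine (finite_iUnion fun i => finite_iUnion fun j =>
    (subsingleton_projAlong_double_points (ha i) (hc i j)).finite).subset ?_
  intro q hq
  obtain ⟨x, y, hx, hy, hxy⟩ :=
    one_lt_encard_iff.1 ((show (1 : ℕ∞) < 2 by norm_num).trans_eq (Eq.symm hq))
  obtain ⟨-, -, i, j, -, hxi, hyj⟩ := double hx.1 hy.1 hxy (hx.2.trans hy.2.symm)
  exact mem_iUnion₂.2 ⟨i, j, x, hseg i hxi, y, hseg j hyj, hxy, hx.2, hy.2⟩

/-- **First part of Lemma 2.1.** If the unit vector `u` avoids the trace set of the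
embedded polygonal arc `L` (conditions (a)–(d)), then the projection `π_u` maps `L` to an
arc diagram: it is injective on each edge, every point of the plane has at most two
preimages in `L`, double points are non-vertex points lying on two distinct edges, and
there are only finitely many double points. -/
theorem arc_diagram_of_trace_set_complement
    (n : ℕ) (hn : 1 ≤ n) (p : Fin (n + 1) → E3)
    (hpe : ∀ i : Fin n, p i.castSucc ≠ p i.succ)
    (hemb : ∀ i j : Fin n, (i : ℕ) < (j : ℕ) →
      (((j : ℕ) = (i : ℕ) + 1 →
          segment ℝ (p i.castSucc) (p i.succ) ∩ segment ℝ (p j.castSucc) (p j.succ)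
            = {p i.succ}) ∧
        ((j : ℕ) ≠ (i : ℕ) + 1 →
          segment ℝ (p i.castSucc) (p i.succ) ∩ segment ℝ (p j.castSucc) (p j.succ)
            = ∅)))
    (u : E3) (hu : ‖u‖ = 1)
    -- (a) `u` is not parallel to any edge
    (ha : ∀ i : Fin n, p i.succ - p i.castSucc ∉ (ℝ ∙ u : Submodule ℝ E3))
    -- (b) for a vertex `v` and an edge line `ℓ j` not containing `v`, `u` is not in the
    -- direction of the plane determined by `v` and `ℓ j`
    (hb : ∀ v : E3, v ∈ Set.range p → ∀ j : Fin n,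
      v ∉ affineSpan ℝ {p j.castSucc, p j.succ} →
      u ∉ (affineSpan ℝ
        ({v} ∪ (affineSpan ℝ {p j.castSucc, p j.succ} : Set E3))).direction)
    -- (c) for two distinct coplanar edge lines, `u` is not in the direction of the plane
    -- containing them
    (hc : ∀ i j : Fin n,
      affineSpan ℝ {p i.castSucc, p i.succ} ≠ affineSpan ℝ {p j.castSucc, p j.succ} →
      ∀ Q : AffineSubspace ℝ E3, finrank ℝ Q.direction = 2 →
        affineSpan ℝ {p i.castSucc, p i.succ} ≤ Q →
        affineSpan ℝ {p j.castSucc, p j.succ} ≤ Q →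
        u ∉ Q.direction)
    -- (d) no line with direction `u` meets `L` in three distinct points
    (hd : ¬ ∃ x y z : E3,
      x ∈ (⋃ i : Fin n, segment ℝ (p i.castSucc) (p i.succ)) ∧
      y ∈ (⋃ i : Fin n, segment ℝ (p i.castSucc) (p i.succ)) ∧
      z ∈ (⋃ i : Fin n, segment ℝ (p i.castSucc) (p i.succ)) ∧
      x ≠ y ∧ x ≠ z ∧ y ≠ z ∧
      y - x ∈ (ℝ ∙ u : Submodule ℝ E3) ∧ z - x ∈ (ℝ ∙ u : Submodule ℝ E3)) :
    (∀ i : Fin n, Set.InjOn (projAlong u) (segment ℝ (p i.castSucc) (p i.succ))) ∧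
    (∀ q : ↥((ℝ ∙ u)ᗮ),
      Set.encard {x ∈ ⋃ i : Fin n, segment ℝ (p i.castSucc) (p i.succ) |
        projAlong u x = q} ≤ 2) ∧
    (∀ x y : E3,
      x ∈ (⋃ i : Fin n, segment ℝ (p i.castSucc) (p i.succ)) →
      y ∈ (⋃ i : Fin n, segment ℝ (p i.castSucc) (p i.succ)) →
      x ≠ y → projAlong u x = projAlong u y →
        x ∉ Set.range p ∧ y ∉ Set.range p ∧
        ∃ i j : Fin n, i ≠ j ∧
          x ∈ segment ℝ (p i.castSucc) (p i.succ) ∧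
          y ∈ segment ℝ (p j.castSucc) (p j.succ)) ∧
    {q : ↥((ℝ ∙ u)ᗮ) |
      Set.encard {x ∈ ⋃ i : Fin n, segment ℝ (p i.castSucc) (p i.succ) |
        projAlong u x = q} = 2}.Finite :=
  arc_diagram_of_trace_set_complement_general n p u ha hb hc hd
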